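/- arXiv:2507.22200 — 2 statements merged into one kernel-verified Lean document; each statement's English description precedes it below -/
import Mathlib

section
/- (Colin de Verdière gauge / Hodge-type splitting.) Let H be a real symmetric n×n matrix strictly supported on the connected graph G, let λ ∈ ℝ and ψ ∈ ℝ^V satisfy Hψ = λψ with dim ker(H − λI) = 1 and ψ_r ≠ 0 for every vertex r. Then ℝ^E is the (not necessarily orthogonal) direct sum ℝ^E = Φ^{-1}Z ⊕ dℝ^V, where Φ^{-1}Z = {Φ^{-1}γ : γ ∈ Z} and dℝ^V is the image of the coboundary map d. -/
open Matrix

/-- A finite simple graph with a chosen orientation of each edge: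
`E` is the edge index type, each edge `e` goes from `src e` to `tgt e`. -/
structure OrientedGraph (V E : Type*) where
  src : E → V
  tgt : E → V
  loopless : ∀ e, src e ≠ tgt e
  edgeInj : ∀ e f, (src e = src f ∧ tgt e = tgt f) ∨ (src e = tgt f ∧ tgt e = src f) → e = f

/-- The underlying simple graph: `r` and `s` are adjacent iff some oriented edge joins them. -/
def OrientedGraph.toSimpleGraph {V E : Type*} (G : OrientedGraph V E) : SimpleGraph V where
  Adj r s := ∃ e, (G.src e = r ∧ G.tgt e = s) ∨ (G.src e = s ∧ G.tgt e = r)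
  symm := by
    constructor
    intro r s h
    obtain ⟨e, h⟩ := h
    exact ⟨e, h.symm⟩
  loopless := by
    constructor
    intro r h
    obtain ⟨e, h⟩ := h
    rcases h with ⟨h1, h2⟩ | ⟨h1, h2⟩ <;> exact G.loopless e (h1.trans h2.symm)

/-- `H` is strictly supported on `G`: off-diagonal entries are nonzero exactly on edges. -/
def OrientedGraph.StrictSupport {V E : Type*} (G : OrientedGraph V E)
    (H : Matrix V V ℝ) : Prop :=
  ∀ r s, r ≠ s → (H r s ≠ 0 ↔ G.toSimpleGraph.Adj r s)

/-- `H` is supported on `G`: off-diagonal nonzero entries occur only on edges. -/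
def OrientedGraph.Support {V E : Type*} (G : OrientedGraph V E)
    (H : Matrix V V ℝ) : Prop :=
  ∀ r s, r ≠ s → H r s ≠ 0 → G.toSimpleGraph.Adj r s

/-- The coboundary map `d : ℝ^V → ℝ^E`, `(dθ)_{(r→s)} = θ_s - θ_r`, as an `E × V` matrix. -/
def OrientedGraph.cob {V E : Type*} [DecidableEq V] (G : OrientedGraph V E) :
    Matrix E V ℝ :=
  Matrix.of fun e v => (if G.tgt e = v then (1 : ℝ) else 0) - (if G.src e = v then (1 : ℝ) else 0)

/-- The cycle space `Z = ker dᵀ ⊆ ℝ^E`. -/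
noncomputable def OrientedGraph.cycleSpace {V E : Type*} [Fintype V] [Fintype E]
    [DecidableEq V] (G : OrientedGraph V E) : Submodule ℝ (E → ℝ) :=
  LinearMap.ker (G.cob)ᵀ.mulVecLin

/-- The diagonal matrix `Φ` on `ℝ^E` with entries `Φ_{(r→s)} = -ψ_r H_{rs} ψ_s`. -/
noncomputable def PhiMat {V E : Type*} [DecidableEq E] (G : OrientedGraph V E)
    (H : Matrix V V ℝ) (ψ : V → ℝ) : Matrix E E ℝ :=
  Matrix.diagonal fun e => -(ψ (G.src e) * H (G.src e) (G.tgt e) * ψ (G.tgt e))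

/-- The nodal count `ν(ψ,H) = #{(r→s) ∈ E : ψ_r H_{rs} ψ_s > 0}`. -/
noncomputable def nodalCount {V E : Type*} (G : OrientedGraph V E)
    (H : Matrix V V ℝ) (ψ : V → ℝ) : ℕ :=
  Nat.card {e : E // 0 < ψ (G.src e) * H (G.src e) (G.tgt e) * ψ (G.tgt e)}

/-- `C` is a frame for the cycle space: its columns form a basis of `Z`. -/
def IsFrame {V E : Type*} [Fintype V] [Fintype E] [DecidableEq V]
    (G : OrientedGraph V E) {β : ℕ} (C : Matrix E (Fin β) ℝ) : Prop :=
  LinearMap.ker C.mulVecLin = ⊥ ∧ LinearMap.range C.mulVecLin = G.cycleSpace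

/-- `n₋(A)`: the number of negative eigenvalues (with multiplicity) of a hermitian matrix. -/
noncomputable def negEig {𝕜 : Type*} [RCLike 𝕜] {m : Type*} [Fintype m] [DecidableEq m]
    (A : Matrix m m 𝕜) : ℕ :=
  if h : A.IsHermitian then Nat.card {i // h.eigenvalues i < 0} else 0

/-- `n₊(A)`: the number of positive eigenvalues (with multiplicity) of a hermitian matrix. -/
noncomputable def posEig {𝕜 : Type*} [RCLike 𝕜] {m : Type*} [Fintype m] [DecidableEq m]
    (A : Matrix m m 𝕜) : ℕ :=
  if h : A.IsHermitian then Nat.card {i // 0 < h.eigenvalues i} else 0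

/-- `n₀(A)`: the number of zero eigenvalues of a hermitian matrix, i.e. `dim ker A`. -/
noncomputable def zeroEig {𝕜 : Type*} [RCLike 𝕜] {m : Type*} [Fintype m] [DecidableEq m]
    (A : Matrix m m 𝕜) : ℕ :=
  Module.finrank 𝕜 (LinearMap.ker A.mulVecLin)

/-- `n₋([A]_W)`: the Morse index (number of negative eigenvalues) of the compression of
a hermitian matrix `A` to the subspace `W`, i.e. the maximal dimension of a subspace of `W`
on which the hermitian form of `A` is negative definite. -/
noncomputable def negIndexOn {𝕜 : Type*} [RCLike 𝕜] {m : Type*} [Fintype m]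
    (A : Matrix m m 𝕜) (W : Submodule 𝕜 (m → 𝕜)) : ℕ :=
  sSup {k : ℕ | ∃ U : Submodule 𝕜 (m → 𝕜), U ≤ W ∧ Module.finrank 𝕜 U = k ∧
    ∀ x ∈ U, x ≠ 0 → RCLike.re (star x ⬝ᵥ A.mulVec x) < 0}

/-- `n₊([A]_W)`: the number of positive eigenvalues of the compression of a hermitian
matrix `A` to the subspace `W`. -/
noncomputable def posIndexOn {𝕜 : Type*} [RCLike 𝕜] {m : Type*} [Fintype m]
    (A : Matrix m m 𝕜) (W : Submodule 𝕜 (m → 𝕜)) : ℕ :=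
  sSup {k : ℕ | ∃ U : Submodule 𝕜 (m → 𝕜), U ≤ W ∧ Module.finrank 𝕜 U = k ∧
    ∀ x ∈ U, x ≠ 0 → 0 < RCLike.re (star x ⬝ᵥ A.mulVec x)}

/-- The linear functional `x ↦ v ⬝ᵥ x`. -/
noncomputable def dotLeft {𝕜 : Type*} [RCLike 𝕜] {m : Type*} [Fintype m] (v : m → 𝕜) :
    (m → 𝕜) →ₗ[𝕜] 𝕜 where
  toFun x := v ⬝ᵥ x
  map_add' x y := by simp [dotProduct_add]
  map_smul' c x := by simp [dotProduct_smul]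

/-- `n₀([A]_W)`: the dimension of the kernel of the compression of `A` to `W`,
i.e. of `{x ∈ W : Ax ⊥ W}`. -/
noncomputable def zeroIndexOn {𝕜 : Type*} [RCLike 𝕜] {m : Type*} [Fintype m]
    (A : Matrix m m 𝕜) (W : Submodule 𝕜 (m → 𝕜)) : ℕ :=
  Module.finrank 𝕜
    ↥(W ⊓ ⨅ y : W, LinearMap.ker ((dotLeft (star (y : m → 𝕜))).comp A.mulVecLin))

/-- Extension of `α ∈ ℝ^E` to an antisymmetric function on pairs of vertices:
`α_{rs} = α_e` if `e = (r→s) ∈ E`, `α_{rs} = -α_e` if `e = (s→r) ∈ E`, and `0` otherwise. -/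
noncomputable def alphaExt {V E : Type*} [Fintype E] [DecidableEq V]
    (G : OrientedGraph V E) (α : E → ℝ) (r s : V) : ℝ :=
  ∑ e : E, ((if G.src e = r ∧ G.tgt e = s then α e else 0) -
            (if G.src e = s ∧ G.tgt e = r then α e else 0))

/-- The phase-perturbed matrix `H_α` with `(H_α)_{rs} = e^{iα_{rs}} H_{rs}` for `r ≠ s`. -/
noncomputable def phaseMat {V E : Type*} [Fintype E] [DecidableEq V]
    (G : OrientedGraph V E) (H : Matrix V V ℝ) (α : E → ℝ) : Matrix V V ℂ :=
  Matrix.of fun r s =>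
    if r = s then (H r r : ℂ)
    else Complex.exp (Complex.I * (alphaExt G α r s : ℂ)) * (H r s : ℂ)

/-!
If `Φ⁻¹γ = dθ` with `γ ∈ Z`, then `dᵀΦdθ = dᵀγ = 0`. Because `Hψ = λψ`, the weighted Laplacian
`dᵀΦd` is the conjugate `θ ↦ ψ · (H - λ)(ψθ)` of `H - λ`, so `ψθ ∈ ker (H - λ) = ℝψ`: `θ` is
constant and `dθ = 0`. The dimensions add up since `dim Φ⁻¹Z = dim ker dᵀ = |E| - rank d`.
-/

lemma Matrix.finrank_ker_transpose_add_finrank_range {m n K : Type*} [Field K] [Fintype m]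
    [Fintype n] (A : Matrix m n K) :
    Module.finrank K (LinearMap.ker Aᵀ.mulVecLin) + Module.finrank K (LinearMap.range A.mulVecLin)
      = Fintype.card m := by
  rw [← Matrix.rank, ← rank_transpose, Matrix.rank, add_comm,
    LinearMap.finrank_range_add_finrank_ker, Module.finrank_fintype_fun_eq_card]

namespace OrientedGraph

variable {V E : Type*} (G : OrientedGraph V E)

-- Each adjacent ordered pair is `(src e, tgt e)` or `(tgt e, src e)` for exactly one edge `e`
-- and one of the two choices.
lemma sum_edges_add_swap [Fintype V] [Fintype E] {M : Type*} [AddCommMonoid M] (F : V → V → M)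
    (hF : ∀ r s, ¬ G.toSimpleGraph.Adj r s → F r s = 0) :
    ∑ e, (F (G.src e) (G.tgt e) + F (G.tgt e) (G.src e)) = ∑ r, ∑ s, F r s := by
  let ends : E × Bool → V × V := fun p =>
    if p.2 then (G.src p.1, G.tgt p.1) else (G.tgt p.1, G.src p.1)
  have hends : Function.Injective ends := by
    rintro ⟨e, _ | _⟩ ⟨f, _ | _⟩ h <;>
      simp only [ends, Prod.mk.injEq, Bool.false_eq_true, if_false, if_true] at h <;>
      obtain rfl := G.edgeInj e f (by tauto)
    exacts [rfl, (G.loopless e h.2).elim, (G.loopless e h.1).elim, rfl]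
  calc ∑ e, (F (G.src e) (G.tgt e) + F (G.tgt e) (G.src e))
      = ∑ p : E × Bool, F (ends p).1 (ends p).2 := by
        simp [Fintype.sum_prod_type, ends]
    _ = ∑ q : V × V, F q.1 q.2 := by
        refine Fintype.sum_of_injective ends hends _ _ (fun q hq => hF _ _ ?_) fun _ => rfl
        rintro ⟨e, he | he⟩
        · exact hq ⟨(e, true), by simp [ends, he.1, he.2]⟩
        · exact hq ⟨(e, false), by simp [ends, he.1, he.2]⟩
    _ = ∑ r, ∑ s, F r s := Fintype.sum_prod_type _

lemma StrictSupport.support {H : Matrix V V ℝ} (h : G.StrictSupport H) : G.Support H :=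
  fun r s hrs => (h r s hrs).mp

lemma StrictSupport.apply_src_tgt_ne_zero {H : Matrix V V ℝ} (h : G.StrictSupport H) (e : E) :
    H (G.src e) (G.tgt e) ≠ 0 :=
  (h _ _ (G.loopless e)).mpr ⟨e, .inl ⟨rfl, rfl⟩⟩

lemma isUnit_det_phiMat [Fintype E] [DecidableEq E] {H : Matrix V V ℝ}
    (hsupp : G.StrictSupport H) {ψ : V → ℝ} (hψ : ∀ r, ψ r ≠ 0) : IsUnit (PhiMat G H ψ).det := by
  rw [PhiMat, det_diagonal, isUnit_iff_ne_zero, Finset.prod_ne_zero_iff]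
  exact fun e _ => neg_ne_zero.mpr <|
    mul_ne_zero (mul_ne_zero (hψ _) (hsupp.apply_src_tgt_ne_zero G e)) (hψ _)

variable [DecidableEq V]

lemma cob_mulVec_apply [Fintype V] (θ : V → ℝ) (e : E) :
    (G.cob *ᵥ θ) e = θ (G.tgt e) - θ (G.src e) := by
  simp [cob, mulVec, dotProduct, sub_mul]

lemma cob_transpose_mulVec_apply [Fintype E] (x : E → ℝ) (v : V) :
    (G.cobᵀ *ᵥ x) v =
      ∑ e, ((if G.tgt e = v then x e else 0) - (if G.src e = v then x e else 0)) := by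
  simp [cob, mulVec, dotProduct, sub_mul]

lemma cob_mulVec_const [Fintype V] (c : ℝ) : G.cob *ᵥ (fun _ => c) = 0 := by
  ext e
  simp [cob_mulVec_apply]

variable [Fintype E] [DecidableEq E]

lemma cob_transpose_mulVec_phiMat_mulVec_cob [Fintype V] {H : Matrix V V ℝ} (hsymm : H.IsSymm)
    (hsupp : G.Support H) {lam : ℝ} {ψ : V → ℝ} (heig : H *ᵥ ψ = lam • ψ) (θ : V → ℝ) :
    G.cobᵀ *ᵥ (PhiMat G H ψ *ᵥ (G.cob *ᵥ θ)) = ψ * ((H - lam • 1) *ᵥ (ψ * θ)) := by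
  ext v
  let F : V → V → ℝ := fun r s => if s = v then -(ψ r * H r s * ψ s) * (θ s - θ r) else 0
  have hF : ∀ r s, ¬ G.toSimpleGraph.Adj r s → F r s = 0 := by
    intro r s hrs
    by_cases h : r = s
    · simp [F, h]
    · have hH : H r s = 0 := not_not.mp (mt (hsupp r s h) hrs)
      simp [F, hH]
  have hlam : lam * ψ v = ∑ r, H v r * ψ r := by
    simpa [mulVec, dotProduct] using (congrFun heig v).symm
  calc (G.cobᵀ *ᵥ (PhiMat G H ψ *ᵥ (G.cob *ᵥ θ))) v
      = ∑ e, (F (G.src e) (G.tgt e) + F (G.tgt e) (G.src e)) := by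
        rw [cob_transpose_mulVec_apply]
        refine Finset.sum_congr rfl fun e _ => ?_
        simp only [F, PhiMat, mulVec_diagonal, cob_mulVec_apply, hsymm.apply (G.src e)]
        split_ifs <;> ring
    _ = ∑ r, ∑ s, F r s := G.sum_edges_add_swap F hF
    _ = ψ v * (∑ r, H v r * (ψ r * θ r) - lam * ψ v * θ v) := by
        simp only [F, Finset.sum_ite_eq', Finset.mem_univ, if_true, hlam, Finset.mul_sum,
          Finset.sum_mul, ← Finset.sum_sub_distrib, hsymm.apply v]
        refine Finset.sum_congr rfl fun r _ => by ring
    _ = _ := by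
        simp [sub_mulVec, smul_mulVec, mulVec, dotProduct, mul_assoc]

lemma cob_mulVec_eq_zero_of_phiMat_mulVec_mem_cycleSpace [Fintype V] {H : Matrix V V ℝ}
    (hsymm : H.IsSymm) (hsupp : G.Support H) {lam : ℝ} {ψ : V → ℝ} (heig : H *ᵥ ψ = lam • ψ)
    (hker : Module.finrank ℝ (LinearMap.ker (H - lam • (1 : Matrix V V ℝ)).mulVecLin) = 1)
    (hψ : ∀ r, ψ r ≠ 0) {θ : V → ℝ} (hθ : PhiMat G H ψ *ᵥ (G.cob *ᵥ θ) ∈ G.cycleSpace) :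
    G.cob *ᵥ θ = 0 := by
  have hψθ : ψ * θ ∈ LinearMap.ker (H - lam • (1 : Matrix V V ℝ)).mulVecLin := by
    have h := G.cob_transpose_mulVec_phiMat_mulVec_cob hsymm hsupp heig θ
    rw [cycleSpace, LinearMap.mem_ker, mulVecLin_apply, h] at hθ
    ext v
    exact (mul_eq_zero.mp (congrFun hθ v)).resolve_left (hψ v)
  have hψker : ψ ∈ LinearMap.ker (H - lam • (1 : Matrix V V ℝ)).mulVecLin := by
    simp [heig]
  have : Nonempty V := by
    by_contra hV
    have h := Submodule.finrank_le (LinearMap.ker (H - lam • (1 : Matrix V V ℝ)).mulVecLin)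
    simp_all
  have hψ0 : ψ ≠ 0 := fun h => hψ (Classical.arbitrary V) (congrFun h _)
  rw [eq_span_singleton_of_mem_of_finrank_eq_one hker hψker hψ0,
    Submodule.mem_span_singleton] at hψθ
  obtain ⟨c, hc⟩ := hψθ
  have hθc : θ = fun _ => c := by
    ext v
    exact mul_left_cancel₀ (hψ v) ((congrFun hc v).symm.trans (mul_comm _ _))
  rw [hθc, cob_mulVec_const]

end OrientedGraph

theorem cdv_gauge_splitting_general
    {V E : Type*} [Fintype V] [Fintype E] [DecidableEq V] [DecidableEq E]
    (G : OrientedGraph V E)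
    (H : Matrix V V ℝ) (hsymm : H.IsSymm) (hsupp : G.StrictSupport H)
    (lam : ℝ) (ψ : V → ℝ) (heig : H.mulVec ψ = lam • ψ)
    (hker : Module.finrank ℝ (LinearMap.ker (H - lam • (1 : Matrix V V ℝ)).mulVecLin) = 1)
    (hψ : ∀ r, ψ r ≠ 0) :
    IsCompl (G.cycleSpace.map ((PhiMat G H ψ)⁻¹).mulVecLin)
      (LinearMap.range G.cob.mulVecLin) := by
  have hΦ := G.isUnit_det_phiMat hsupp hψ
  refine (Submodule.isCompl_iff_disjoint _ _ ?_).mpr ?_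
  · have hinj : Function.Injective (PhiMat G H ψ)⁻¹.mulVecLin :=
      mulVec_injective_of_isUnit ((isUnit_iff_isUnit_det _).mpr (isUnit_nonsing_inv_det _ hΦ))
    rw [← (Submodule.equivMapOfInjective _ hinj _).finrank_eq, OrientedGraph.cycleSpace,
      G.cob.finrank_ker_transpose_add_finrank_range, Module.finrank_fintype_fun_eq_card]
  · rw [Submodule.disjoint_def]
    rintro _ ⟨γ, hγ, rfl⟩ ⟨θ, hθ⟩
    have hγθ : PhiMat G H ψ *ᵥ (G.cob *ᵥ θ) = γ := by
      rw [mulVecLin_apply] at hθ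
      rw [hθ, mulVecLin_apply, mulVec_mulVec, mul_nonsing_inv _ hΦ, one_mulVec]
    rw [← hθ, mulVecLin_apply]
    exact G.cob_mulVec_eq_zero_of_phiMat_mulVec_mem_cycleSpace hsymm hsupp.support heig hker hψ
      (hγθ ▸ hγ)

/-- the Colin de Verdière gauge / Hodge-type splitting
`ℝ^E = Φ⁻¹Z ⊕ dℝ^V` (a not-necessarily-orthogonal direct sum). -/
theorem cdv_gauge_splitting
    {V E : Type*} [Fintype V] [Fintype E] [DecidableEq V] [DecidableEq E]
    (G : OrientedGraph V E) (hconn : G.toSimpleGraph.Connected)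
    (H : Matrix V V ℝ) (hsymm : H.IsSymm) (hsupp : G.StrictSupport H)
    (lam : ℝ) (ψ : V → ℝ) (heig : H.mulVec ψ = lam • ψ)
    (hker : Module.finrank ℝ (LinearMap.ker (H - lam • (1 : Matrix V V ℝ)).mulVecLin) = 1)
    (hψ : ∀ r, ψ r ≠ 0) :
    IsCompl (G.cycleSpace.map ((PhiMat G H ψ)⁻¹).mulVecLin)
      (LinearMap.range G.cob.mulVecLin) :=
  cdv_gauge_splitting_general G H hsymm hsupp lam ψ heig hker hψ
end

section
/- Let H be a real symmetric n×n matrix strictly supported on the connected graph G, let λ ∈ ℝ and ψ ∈ ℝ^V satisfy Hψ = λψ with dim ker(H − λI) = 1 and ψ_r ≠ 0 for every vertex r, and let C be a frame for the cycle space Z. Then the β×β weighted cycle intersection matrix C^⊤ Φ^{-1} C is nondegenerate: n_0(C^⊤ Φ^{-1} C) = 0, i.e., C^⊤ Φ^{-1} C is invertible. -/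
open Matrix

/-!
If `Cᵀ Φ⁻¹ C x = 0`, then `γ = C x` is a cycle and `Φ⁻¹ γ` is orthogonal to every cycle, hence a
coboundary `dθ`; so `dᵀ Φ d θ = dᵀ γ = 0`. Because `H` is symmetric, supported on `G` and
`Hψ = λψ`, the weighted Laplacian `dᵀ Φ d` is `θ ↦ ψ ⊙ (H - λ)(ψ ⊙ θ)` (pointwise products), so
`ψ ⊙ θ` lies in the eigenspace of `λ`, which is spanned by `ψ`. Hence `θ` is constant, `dθ = 0`
and `γ = Φ dθ = 0`.
-/

theorem Matrix.exists_mulVec_eq_of_forall_dotProduct_eq_zero {K m n : Type*} [Field K]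
    [Fintype m] [Fintype n] (A : Matrix m n K) (y : m → K)
    (hy : ∀ z, Aᵀ *ᵥ z = 0 → y ⬝ᵥ z = 0) : ∃ θ, A *ᵥ θ = y := by
  classical
  have hmem : dotProductEquiv K m y ∈ (LinearMap.ker Aᵀ.mulVecLin).dualAnnihilator :=
    (Submodule.mem_dualAnnihilator _).mpr hy
  obtain ⟨φ, hφ⟩ := (LinearMap.range_dualMap_eq_dualAnnihilator_ker _).ge hmem
  obtain ⟨θ, rfl⟩ := (dotProductEquiv K n).surjective φ
  refine ⟨θ, (dotProductEquiv K m).injective (LinearMap.ext fun z => ?_)⟩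
  calc A *ᵥ θ ⬝ᵥ z = θ ⬝ᵥ Aᵀ *ᵥ z := by
        rw [dotProduct_comm, dotProduct_mulVec, mulVec_transpose, dotProduct_comm]
    _ = y ⬝ᵥ z := LinearMap.congr_fun hφ z

theorem Matrix.ker_mulVecLin_transpose_mul_inv_mul_eq_bot {K m n p : Type*} [Field K]
    [Fintype m] [DecidableEq m] [Fintype n] [Fintype p]
    (A : Matrix m n K) {Φ : Matrix m m K} (hΦ : IsUnit Φ) (C : Matrix m p K)
    (hC_inj : LinearMap.ker C.mulVecLin = ⊥)
    (hC_range : LinearMap.range C.mulVecLin = LinearMap.ker Aᵀ.mulVecLin)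
    (hA : ∀ θ, Aᵀ *ᵥ (Φ *ᵥ (A *ᵥ θ)) = 0 → A *ᵥ θ = 0) :
    LinearMap.ker (Cᵀ * Φ⁻¹ * C).mulVecLin = ⊥ := by
  refine (LinearMap.ker_eq_bot').mpr fun x hx => ?_
  set γ := C *ᵥ x
  have hγ_perp : Cᵀ *ᵥ (Φ⁻¹ *ᵥ γ) = 0 := by
    rw [mulVec_mulVec, mulVec_mulVec]
    exact hx
  have hγ_cycle : Aᵀ *ᵥ γ = 0 := (hC_range.le ⟨x, rfl⟩ : γ ∈ LinearMap.ker Aᵀ.mulVecLin)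
  obtain ⟨θ, hθ⟩ := exists_mulVec_eq_of_forall_dotProduct_eq_zero A (Φ⁻¹ *ᵥ γ) fun z hz => by
    obtain ⟨u, rfl⟩ := hC_range.ge hz
    rw [mulVecLin_apply, dotProduct_mulVec, ← mulVec_transpose, hγ_perp, zero_dotProduct]
  have hΦθ : Φ *ᵥ (A *ᵥ θ) = γ := by
    rw [hθ, mulVec_mulVec, mul_nonsing_inv _ ((isUnit_iff_isUnit_det Φ).mp hΦ), one_mulVec]
  have hAθ : A *ᵥ θ = 0 := hA θ (hΦθ ▸ hγ_cycle)
  have hγ : γ = 0 := by rw [← hΦθ, hAθ, mulVec_zero]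
  simpa using (LinearMap.ker_eq_bot'.mp hC_inj) x hγ

namespace OrientedGraph

theorem StrictSupport.support_s10 {V E : Type*} {G : OrientedGraph V E} {H : Matrix V V ℝ}
    (hsupp : G.StrictSupport H) : G.Support H :=
  fun r s hrs => (hsupp r s hrs).mp

theorem isUnit_PhiMat {V E : Type*} [Fintype E] [DecidableEq E] (G : OrientedGraph V E)
    {H : Matrix V V ℝ} {ψ : V → ℝ} (hsupp : G.StrictSupport H) (hψ : ∀ r, ψ r ≠ 0) :
    IsUnit (PhiMat G H ψ) := by
  refine isUnit_diagonal.mpr (Pi.isUnit_iff.mpr fun e => (neg_ne_zero.mpr ?_).isUnit)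
  have hH : H (G.src e) (G.tgt e) ≠ 0 :=
    (hsupp _ _ (G.loopless e)).mpr ⟨e, Or.inl ⟨rfl, rfl⟩⟩
  exact mul_ne_zero (mul_ne_zero (hψ _) hH) (hψ _)

variable {V E : Type*} [DecidableEq V] (G : OrientedGraph V E)

theorem cob_mulVec [Fintype V] (θ : V → ℝ) :
    G.cob *ᵥ θ = fun e => θ (G.tgt e) - θ (G.src e) := by
  ext e
  simp [cob, mulVec, dotProduct, sub_mul, Finset.sum_sub_distrib]

variable [Fintype E]

def edgesBetween (v s : V) : Finset E :=
  {e | (G.src e = v ∧ G.tgt e = s) ∨ (G.src e = s ∧ G.tgt e = v)}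

open Classical in
theorem card_edgesBetween (v s : V) :
    (G.edgesBetween v s).card = if G.toSimpleGraph.Adj v s then 1 else 0 := by
  have hsub : (G.edgesBetween v s).card ≤ 1 := by
    refine Finset.card_le_one.mpr fun e he f hf => G.edgeInj e f ?_
    simp only [edgesBetween, Finset.mem_filter, Finset.mem_univ, true_and] at he hf
    rcases he with ⟨he₁, he₂⟩ | ⟨he₁, he₂⟩ <;> rcases hf with ⟨hf₁, hf₂⟩ | ⟨hf₁, hf₂⟩ <;>
      simp_all
  split_ifs with hadj
  · obtain ⟨e, he⟩ := hadj
    have : 0 < (G.edgesBetween v s).card :=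
      Finset.card_pos.mpr ⟨e, by simpa [edgesBetween] using he⟩
    omega
  · exact Finset.card_eq_zero.mpr (Finset.filter_eq_empty_iff.mpr fun e _ he => hadj ⟨e, he⟩)

variable [Fintype V]

theorem sum_incident_eq_sum_card_edgesBetween_mul (v : V) (f : V → ℝ) :
    ∑ e, ((if G.tgt e = v then f (G.src e) else 0) + (if G.src e = v then f (G.tgt e) else 0)) =
      ∑ s, (G.edgesBetween v s).card * f s := by
  simp only [Finset.card_eq_sum_ones, Nat.cast_sum, Finset.sum_mul, edgesBetween,
    Finset.sum_filter]
  rw [Finset.sum_comm]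
  refine Finset.sum_congr rfl fun e _ => ?_
  by_cases ht : G.tgt e = v
  · have hs : G.src e ≠ v := fun h => G.loopless e (h.trans ht.symm)
    simp [ht, hs, eq_comm]
  · by_cases hs : G.src e = v
    · simp [ht, hs, eq_comm]
    · simp [ht, hs]

variable [DecidableEq E]

theorem cob_transpose_mulVec_diagonal_mulVec_cob (K : Matrix V V ℝ)
    (hK : K.IsSymm) (hsupp : G.Support K) (θ : V → ℝ) :
    (G.cob)ᵀ *ᵥ (diagonal (fun e => -K (G.src e) (G.tgt e)) *ᵥ (G.cob *ᵥ θ)) =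
      fun v => ∑ s, K v s * (θ s - θ v) := by
  funext v
  set F : V → ℝ := fun s => K v s * (θ s - θ v)
  have hedge : ∀ e, -K (G.src e) (G.tgt e) * (θ (G.tgt e) - θ (G.src e)) * G.cob e v =
      (if G.tgt e = v then F (G.src e) else 0) + (if G.src e = v then F (G.tgt e) else 0) := by
    intro e
    by_cases ht : G.tgt e = v
    · have hs : G.src e ≠ v := fun h => G.loopless e (h.trans ht.symm)
      simp only [ht, hK.apply, neg_mul, cob, of_apply, ↓reduceIte, hs, sub_zero, mul_one,
        add_zero, F]
      ring
    · by_cases hs : G.src e = v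
      · simp [cob, ht, hs, F]
      · simp [cob, ht, hs]
  have hF : ∀ s, (G.edgesBetween v s).card * F s = F s := by
    intro s
    classical
    rw [card_edgesBetween]
    split_ifs with hadj
    · simp
    · by_cases hsv : v = s
      · simp [F, hsv]
      · simp [F, not_not.mp (mt (hsupp v s hsv) hadj)]
  calc ((G.cob)ᵀ *ᵥ (diagonal (fun e => -K (G.src e) (G.tgt e)) *ᵥ (G.cob *ᵥ θ))) v
      = ∑ e, -K (G.src e) (G.tgt e) * (θ (G.tgt e) - θ (G.src e)) * G.cob e v := by
        simp only [cob_mulVec, mulVec_transpose, vecMul, dotProduct, mulVec_diagonal]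
    _ = ∑ s, (G.edgesBetween v s).card * F s := by
        rw [Finset.sum_congr rfl fun e _ => hedge e, sum_incident_eq_sum_card_edgesBetween_mul]
    _ = ∑ s, F s := Finset.sum_congr rfl fun s _ => hF s

variable {H : Matrix V V ℝ} {lam : ℝ} {ψ : V → ℝ}

theorem cob_transpose_mulVec_PhiMat_mulVec_cob (hsymm : H.IsSymm) (hsupp : G.Support H)
    (heig : H *ᵥ ψ = lam • ψ) (θ : V → ℝ) :
    (G.cob)ᵀ *ᵥ (PhiMat G H ψ *ᵥ (G.cob *ᵥ θ)) =
      ψ * ((H - lam • (1 : Matrix V V ℝ)) *ᵥ (ψ * θ)) := by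
  set K : Matrix V V ℝ := of fun r s => ψ r * H r s * ψ s
  have hK : K.IsSymm := by
    ext r s
    simp only [K, transpose_apply, of_apply, hsymm.apply]
    ring
  have hKsupp : G.Support K := fun r s hrs hK => hsupp r s hrs fun h => hK (by simp [K, h])
  change (G.cob)ᵀ *ᵥ (diagonal (fun e => -K (G.src e) (G.tgt e)) *ᵥ (G.cob *ᵥ θ)) = _
  rw [G.cob_transpose_mulVec_diagonal_mulVec_cob K hK hKsupp θ]
  funext v
  have hv : ∑ s, H v s * ψ s = lam * ψ v := congrFun heig v
  calc ∑ s, K v s * (θ s - θ v)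
      = ψ v * (∑ s, H v s * (ψ s * θ s) - θ v * ∑ s, H v s * ψ s) := by
        simp only [K, of_apply, Finset.mul_sum, ← Finset.sum_sub_distrib]
        exact Finset.sum_congr rfl fun s _ => by ring
    _ = (ψ * ((H - lam • (1 : Matrix V V ℝ)) *ᵥ (ψ * θ)) : V → ℝ) v := by
        rw [sub_mulVec, smul_mulVec, one_mulVec]
        simp only [Pi.mul_apply, Pi.sub_apply, Pi.smul_apply, mulVec, dotProduct, hv,
          smul_eq_mul]
        ring

theorem cob_mulVec_eq_zero_of_cob_transpose_PhiMat_eq_zero (hsymm : H.IsSymm)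
    (hsupp : G.Support H) (heig : H *ᵥ ψ = lam • ψ)
    (hker : Module.finrank ℝ (LinearMap.ker (H - lam • (1 : Matrix V V ℝ)).mulVecLin) = 1)
    (hψ : ∀ r, ψ r ≠ 0) (θ : V → ℝ)
    (hθ : (G.cob)ᵀ *ᵥ (PhiMat G H ψ *ᵥ (G.cob *ᵥ θ)) = 0) :
    G.cob *ᵥ θ = 0 := by
  have hψθ : ψ * θ ∈ LinearMap.ker (H - lam • (1 : Matrix V V ℝ)).mulVecLin := by
    rw [G.cob_transpose_mulVec_PhiMat_mulVec_cob hsymm hsupp heig] at hθ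
    funext r
    exact (mul_eq_zero.mp (congrFun hθ r)).resolve_left (hψ r)
  have hψker : ψ ∈ LinearMap.ker (H - lam • (1 : Matrix V V ℝ)).mulVecLin := by
    rw [LinearMap.mem_ker, mulVecLin_apply, sub_mulVec, smul_mulVec, one_mulVec, heig, sub_self]
  have hψ0 : (⟨ψ, hψker⟩ : LinearMap.ker _) ≠ 0 := by
    intro h0
    have : IsEmpty V := ⟨fun r => hψ r (congrFun (congrArg Subtype.val h0) r)⟩
    rw [Module.finrank_zero_of_subsingleton] at hker
    exact zero_ne_one hker
  obtain ⟨c, hc⟩ := (finrank_eq_one_iff_of_nonzero' _ hψ0).mp hker ⟨ψ * θ, hψθ⟩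
  have hθc : ∀ r, θ r = c := fun r =>
    mul_left_cancel₀ (hψ r) ((congrFun (congrArg Subtype.val hc) r).symm.trans (mul_comm _ _))
  funext e
  simp [cob_mulVec, hθc]

end OrientedGraph

theorem cycle_intersection_form_nondegenerate_general
    {V E : Type*} [Fintype V] [Fintype E] [DecidableEq V] [DecidableEq E]
    (G : OrientedGraph V E)
    (H : Matrix V V ℝ) (hsymm : H.IsSymm) (hsupp : G.StrictSupport H)
    (lam : ℝ) (ψ : V → ℝ) (heig : H.mulVec ψ = lam • ψ)
    (hker : Module.finrank ℝ (LinearMap.ker (H - lam • (1 : Matrix V V ℝ)).mulVecLin) = 1)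
    (hψ : ∀ r, ψ r ≠ 0)
    {β : ℕ} (C : Matrix E (Fin β) ℝ) (hC : IsFrame G C) :
    zeroEig (Cᵀ * (PhiMat G H ψ)⁻¹ * C) = 0 ∧
      IsUnit (Cᵀ * (PhiMat G H ψ)⁻¹ * C).det := by
  have hkerM := Matrix.ker_mulVecLin_transpose_mul_inv_mul_eq_bot G.cob
    (G.isUnit_PhiMat hsupp hψ) C hC.1 hC.2
    (G.cob_mulVec_eq_zero_of_cob_transpose_PhiMat_eq_zero hsymm hsupp.support_s10 heig hker hψ)
  refine ⟨by rw [zeroEig, hkerM, finrank_bot], ?_⟩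
  have hinj : Function.Injective (Cᵀ * (PhiMat G H ψ)⁻¹ * C).mulVec := by
    rwa [LinearMap.ker_eq_bot, coe_mulVecLin] at hkerM
  exact (isUnit_iff_isUnit_det _).mp (mulVec_injective_iff_isUnit.mp hinj)

/-- the weighted cycle intersection matrix `Cᵀ Φ⁻¹ C` is nondegenerate. -/
theorem cycle_intersection_form_nondegenerate
    {V E : Type*} [Fintype V] [Fintype E] [DecidableEq V] [DecidableEq E]
    (G : OrientedGraph V E) (hconn : G.toSimpleGraph.Connected)
    (H : Matrix V V ℝ) (hsymm : H.IsSymm) (hsupp : G.StrictSupport H)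
    (lam : ℝ) (ψ : V → ℝ) (heig : H.mulVec ψ = lam • ψ)
    (hker : Module.finrank ℝ (LinearMap.ker (H - lam • (1 : Matrix V V ℝ)).mulVecLin) = 1)
    (hψ : ∀ r, ψ r ≠ 0)
    {β : ℕ} (C : Matrix E (Fin β) ℝ) (hC : IsFrame G C) :
    zeroEig (Cᵀ * (PhiMat G H ψ)⁻¹ * C) = 0 ∧
      IsUnit (Cᵀ * (PhiMat G H ψ)⁻¹ * C).det :=
  cycle_intersection_form_nondegenerate_general G H hsymm hsupp lam ψ heig hker hψ C hC
end
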